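/- Let X and Y be Polish spaces, let μ ∈ P(X), ν ∈ P(Y), and let h_n : X × Y → [0,∞) be lower semicontinuous cost functions increasing pointwise to a function h with K_h(μ,ν) < ∞. Let π_n ∈ Π(μ,ν) be optimal measures for h_n (i.e., ∫ h_n dπ_n = K_{h_n}(μ,ν)) converging weakly to a measure π. Then π is an optimal measure for h, i.e., ∫ h dπ = K_h(μ,ν); moreover K_h(μ,ν) = lim_{n→∞} K_{h_n}(μ,ν) = lim_{n→∞} ∫ h_n dπ_n. -/

import Mathlib

/-!
Writing `K = K_h(μ,ν)`, the chain
`K ≤ ∫ h dπ ≤ liminf ∫ h_n dπ_n = liminf K_{h_n}(μ,ν) ≤ limsup K_{h_n}(μ,ν) ≤ K`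
closes up. The first step holds because the marginals pass to the weak limit `π`; the second
combines the portmanteau inequality for the lower semicontinuous `h_k` with monotone convergence
`h_k ↑ h`; the last because `h_n ≤ h`.
-/

open MeasureTheory Filter Topology
open scoped ENNReal NNReal

/-- The Borel σ-algebra on the space of Borel probability measures
equipped with the weak topology. -/
@[local instance]
noncomputable def probabilityMeasureBorel (α : Type*) [MeasurableSpace α] [TopologicalSpace α]
    [OpensMeasurableSpace α] : MeasurableSpace (ProbabilityMeasure α) := borel _

/-- The Kantorovich transportation cost `K_h(μ,ν)`: the infimum of `∫ h dσ` over all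
measures `σ` on `X × Y` whose marginals are `μ` and `ν`. -/
noncomputable def transportCost {X Y : Type*} [MeasurableSpace X] [MeasurableSpace Y]
    (h : X × Y → ℝ) (μ : Measure X) (ν : Measure Y) : ℝ≥0∞ :=
  ⨅ σ ∈ {σ : Measure (X × Y) | σ.map Prod.fst = μ ∧ σ.map Prod.snd = ν},
    ∫⁻ p, ENNReal.ofReal (h p) ∂σ

/-- The layer-cake formula reduces the integral of `f` to the measures of its strict
superlevel sets, which are open; Fatou's lemma in the level variable concludes. -/
lemma LowerSemicontinuous.lintegral_le_liminf_lintegral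
    {Ω : Type*} [MeasurableSpace Ω] [TopologicalSpace Ω] [OpensMeasurableSpace Ω]
    {μ : Measure Ω} {μs : ℕ → Measure Ω} {f : Ω → ℝ} (f_lsc : LowerSemicontinuous f)
    (f_nn : 0 ≤ f) (h_opens : ∀ G, IsOpen G → μ G ≤ atTop.liminf (fun i ↦ μs i G)) :
    ∫⁻ x, ENNReal.ofReal (f x) ∂μ ≤ atTop.liminf (fun i ↦ ∫⁻ x, ENNReal.ofReal (f x) ∂(μs i)) := by
  simp_rw [lintegral_eq_lintegral_meas_lt _ (Eventually.of_forall f_nn)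
    f_lsc.measurable.aemeasurable]
  calc ∫⁻ t in Set.Ioi 0, μ {a | t < f a}
      ≤ ∫⁻ t in Set.Ioi 0, atTop.liminf (fun i ↦ μs i {a | t < f a}) :=
        lintegral_mono fun t ↦ h_opens _ (f_lsc.isOpen_preimage t)
    _ ≤ atTop.liminf (fun i ↦ ∫⁻ t in Set.Ioi 0, μs i {a | t < f a}) :=
        lintegral_liminf_le fun _ ↦ Antitone.measurable fun _ _ hst ↦
          measure_mono fun _ hω ↦ lt_of_le_of_lt hst hω

namespace MeasureTheory.ProbabilityMeasure

variable {Ω : Type*} [MeasurableSpace Ω] [TopologicalSpace Ω] [OpensMeasurableSpace Ω]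

/-- Each `f k` is eventually below `f m`, and `∫ f k dπlim ↑ ∫ g dπlim` by monotone
convergence. -/
lemma lintegral_le_liminf_lintegral_of_tendsto_of_monotone [HasOuterApproxClosed Ω]
    {π : ℕ → ProbabilityMeasure Ω} {πlim : ProbabilityMeasure Ω}
    (hπ : Tendsto π atTop (𝓝 πlim)) {f : ℕ → Ω → ℝ} {g : Ω → ℝ}
    (hlsc : ∀ n, LowerSemicontinuous (f n)) (hnonneg : ∀ n, 0 ≤ f n)
    (hmono : ∀ x, Monotone fun n ↦ f n x) (hlim : ∀ x, Tendsto (fun n ↦ f n x) atTop (𝓝 (g x))) :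
    ∫⁻ x, ENNReal.ofReal (g x) ∂(πlim : Measure Ω) ≤
      atTop.liminf fun m ↦ ∫⁻ x, ENNReal.ofReal (f m x) ∂(π m : Measure Ω) := by
  have h_opens (G : Set Ω) (hG : IsOpen G) :
      (πlim : Measure Ω) G ≤ atTop.liminf fun m ↦ (π m : Measure Ω) G :=
    le_liminf_measure_open_of_tendsto hπ hG
  have h_mct : Tendsto (fun k ↦ ∫⁻ x, ENNReal.ofReal (f k x) ∂(πlim : Measure Ω)) atTop
      (𝓝 (∫⁻ x, ENNReal.ofReal (g x) ∂(πlim : Measure Ω))) :=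
    lintegral_tendsto_of_tendsto_of_monotone
      (fun k ↦ (ENNReal.measurable_ofReal.comp (hlsc k).measurable).aemeasurable)
      (Eventually.of_forall fun x _ _ hkl ↦ ENNReal.ofReal_le_ofReal (hmono x hkl))
      (Eventually.of_forall fun x ↦ (ENNReal.continuous_ofReal.tendsto _).comp (hlim x))
  refine le_of_tendsto' h_mct fun k ↦ ?_
  calc ∫⁻ x, ENNReal.ofReal (f k x) ∂(πlim : Measure Ω)
      ≤ atTop.liminf fun m ↦ ∫⁻ x, ENNReal.ofReal (f k x) ∂(π m : Measure Ω) :=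
        (hlsc k).lintegral_le_liminf_lintegral (hnonneg k) h_opens
    _ ≤ atTop.liminf fun m ↦ ∫⁻ x, ENNReal.ofReal (f m x) ∂(π m : Measure Ω) :=
        liminf_le_liminf <| eventually_atTop.2 ⟨k, fun _ hm ↦
          lintegral_mono fun x ↦ ENNReal.ofReal_le_ofReal (hmono x hm)⟩

lemma map_eq_of_tendsto_of_forall_map_eq {ι : Type*} {L : Filter ι} [L.NeBot]
    {Ω' : Type*} [MeasurableSpace Ω'] [TopologicalSpace Ω'] [HasOuterApproxClosed Ω']
    [BorelSpace Ω'] {π : ι → ProbabilityMeasure Ω} {πlim : ProbabilityMeasure Ω}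
    (hπ : Tendsto π L (𝓝 πlim)) {f : Ω → Ω'} (hf : Continuous f) {ρ : Measure Ω'}
    (hρ : ∀ i, (π i : Measure Ω).map f = ρ) :
    (πlim : Measure Ω).map f = ρ := by
  obtain ⟨i₀⟩ := L.nonempty_of_neBot
  have h_const (i : ι) :
      (π i).map hf.measurable.aemeasurable = (π i₀).map hf.measurable.aemeasurable :=
    toMeasure_injective <| by simp only [toMeasure_map, hρ]
  have h_lim := tendsto_nhds_unique (tendsto_map_of_tendsto_of_continuous π πlim hπ hf)
    (tendsto_const_nhds.congr fun i ↦ (h_const i).symm)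
  simpa only [toMeasure_map, hρ] using congrArg toMeasure h_lim

end MeasureTheory.ProbabilityMeasure

section transportCost

variable {X Y : Type*} [MeasurableSpace X] [MeasurableSpace Y] {μ : Measure X} {ν : Measure Y}

lemma transportCost_le_lintegral {h : X × Y → ℝ} {σ : Measure (X × Y)}
    (hσ : σ.map Prod.fst = μ ∧ σ.map Prod.snd = ν) :
    transportCost h μ ν ≤ ∫⁻ p, ENNReal.ofReal (h p) ∂σ :=
  iInf₂_le σ hσ

lemma transportCost_mono {h₁ h₂ : X × Y → ℝ} (h₁₂ : h₁ ≤ h₂) :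
    transportCost h₁ μ ν ≤ transportCost h₂ μ ν :=
  iInf₂_mono fun _ _ ↦ lintegral_mono fun p ↦ ENNReal.ofReal_le_ofReal (h₁₂ p)

end transportCost

theorem stmt17_general {X Y : Type*}
    [TopologicalSpace X] [PolishSpace X] [MeasurableSpace X] [BorelSpace X]
    [TopologicalSpace Y] [PolishSpace Y] [MeasurableSpace Y] [BorelSpace Y]
    (μ : Measure X) (ν : Measure Y)
    (hn : ℕ → X × Y → ℝ) (h : X × Y → ℝ)
    (hlsc : ∀ n, LowerSemicontinuous (hn n)) (hnonneg : ∀ n p, 0 ≤ hn n p)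
    (hmono : ∀ p, Monotone fun n => hn n p)
    (hlim : ∀ p, Tendsto (fun n => hn n p) atTop (nhds (h p)))
    (π : ℕ → ProbabilityMeasure (X × Y)) (πlim : ProbabilityMeasure (X × Y))
    (hπmarg : ∀ n, (π n : Measure (X × Y)).map Prod.fst = μ ∧
      (π n : Measure (X × Y)).map Prod.snd = ν)
    (hπopt : ∀ n, ∫⁻ p, ENNReal.ofReal (hn n p) ∂(π n : Measure (X × Y)) =
      transportCost (hn n) μ ν)
    (hπconv : Tendsto π atTop (nhds πlim)) :
    ((πlim : Measure (X × Y)).map Prod.fst = μ ∧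
     (πlim : Measure (X × Y)).map Prod.snd = ν ∧
     ∫⁻ p, ENNReal.ofReal (h p) ∂(πlim : Measure (X × Y)) = transportCost h μ ν) ∧
    Tendsto (fun n => transportCost (hn n) μ ν) atTop (nhds (transportCost h μ ν)) ∧
    Tendsto (fun n => ∫⁻ p, ENNReal.ofReal (hn n p) ∂(π n : Measure (X × Y))) atTop
      (nhds (transportCost h μ ν)) := by
  have hmarg : (πlim : Measure (X × Y)).map Prod.fst = μ ∧
      (πlim : Measure (X × Y)).map Prod.snd = ν :=
    ⟨ProbabilityMeasure.map_eq_of_tendsto_of_forall_map_eq hπconv continuous_fst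
      fun n ↦ (hπmarg n).1,
    ProbabilityMeasure.map_eq_of_tendsto_of_forall_map_eq hπconv continuous_snd
      fun n ↦ (hπmarg n).2⟩
  have hK_le_lim : transportCost h μ ν ≤ ∫⁻ p, ENNReal.ofReal (h p) ∂(πlim : Measure (X × Y)) :=
    transportCost_le_lintegral hmarg
  have hlim_le : ∫⁻ p, ENNReal.ofReal (h p) ∂(πlim : Measure (X × Y)) ≤
      atTop.liminf fun n ↦ transportCost (hn n) μ ν := by
    simpa only [hπopt] using
      ProbabilityMeasure.lintegral_le_liminf_lintegral_of_tendsto_of_monotone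
        hπconv hlsc hnonneg hmono hlim
  have hKn_le (n : ℕ) : transportCost (hn n) μ ν ≤ transportCost h μ ν :=
    transportCost_mono fun p ↦ (hmono p).ge_of_tendsto (hlim p) n
  have hK : Tendsto (fun n ↦ transportCost (hn n) μ ν) atTop (𝓝 (transportCost h μ ν)) :=
    tendsto_of_le_liminf_of_limsup_le (hK_le_lim.trans hlim_le)
      (limsup_le_of_le (h := Eventually.of_forall hKn_le))
  refine ⟨⟨hmarg.1, hmarg.2, le_antisymm (hlim_le.trans hK.liminf_eq.le) hK_le_lim⟩, hK, ?_⟩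
  simpa only [hπopt] using hK

/-- Let X and Y be Polish spaces, μ ∈ P(X), ν ∈ P(Y), and h_n : X × Y → [0,∞) lower
semicontinuous cost functions increasing pointwise to h with K_h(μ,ν) < ∞. Let
π_n ∈ Π(μ,ν) be optimal measures for h_n converging weakly to π. Then π is optimal for h,
i.e. ∫ h dπ = K_h(μ,ν); moreover K_h(μ,ν) = lim_n K_{h_n}(μ,ν) = lim_n ∫ h_n dπ_n. -/
theorem stmt17 {X Y : Type*}
    [TopologicalSpace X] [PolishSpace X] [MeasurableSpace X] [BorelSpace X]
    [TopologicalSpace Y] [PolishSpace Y] [MeasurableSpace Y] [BorelSpace Y]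
    (μ : Measure X) (ν : Measure Y)
    [IsProbabilityMeasure μ] [IsProbabilityMeasure ν]
    (hn : ℕ → X × Y → ℝ) (h : X × Y → ℝ)
    (hlsc : ∀ n, LowerSemicontinuous (hn n)) (hnonneg : ∀ n p, 0 ≤ hn n p)
    (hmono : ∀ p, Monotone fun n => hn n p)
    (hlim : ∀ p, Tendsto (fun n => hn n p) atTop (nhds (h p)))
    (hfin : transportCost h μ ν ≠ ⊤)
    (π : ℕ → ProbabilityMeasure (X × Y)) (πlim : ProbabilityMeasure (X × Y))
    (hπmarg : ∀ n, (π n : Measure (X × Y)).map Prod.fst = μ ∧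
      (π n : Measure (X × Y)).map Prod.snd = ν)
    (hπopt : ∀ n, ∫⁻ p, ENNReal.ofReal (hn n p) ∂(π n : Measure (X × Y)) =
      transportCost (hn n) μ ν)
    (hπconv : Tendsto π atTop (nhds πlim)) :
    ((πlim : Measure (X × Y)).map Prod.fst = μ ∧
     (πlim : Measure (X × Y)).map Prod.snd = ν ∧
     ∫⁻ p, ENNReal.ofReal (h p) ∂(πlim : Measure (X × Y)) = transportCost h μ ν) ∧
    Tendsto (fun n => transportCost (hn n) μ ν) atTop (nhds (transportCost h μ ν)) ∧
    Tendsto (fun n => ∫⁻ p, ENNReal.ofReal (hn n p) ∂(π n : Measure (X × Y))) atTop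
      (nhds (transportCost h μ ν)) :=
  stmt17_general μ ν hn h hlsc hnonneg hmono hlim π πlim hπmarg hπopt hπconv
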